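/- arXiv:2101.06492 — 2 statements merged into one kernel-verified Lean document; each statement's English description precedes it below -/
import Mathlib

section
/- Let α : ℝ → ℝ be locally Lipschitz, strictly increasing, with α(0) = 0 (an extended class K function). Let h : [0, T) → ℝ be continuously differentiable with h(0) ≥ 0 and h'(t) ≥ -α(h(t)) for all t ∈ [0, T). Then h(t) ≥ 0 for all t ∈ [0, T). -/
/-- If `α` is locally Lipschitz, strictly increasing with `α 0 = 0`
(an extended class `K` function), and `h : [0, T) → ℝ` is continuously differentiable
with `h 0 ≥ 0` and `h' t ≥ -α (h t)` on `[0, T)`, then `h t ≥ 0` on `[0, T)`. -/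
theorem stmt_2 (α : ℝ → ℝ) (hαlip : LocallyLipschitz α) (hαmono : StrictMono α)
    (hα0 : α 0 = 0) (T : ℝ) (hT : 0 < T) (h h' : ℝ → ℝ)
    (hderiv : ∀ t ∈ Set.Ico (0 : ℝ) T, HasDerivAt h (h' t) t)
    (hcont : ContinuousOn h' (Set.Ico (0 : ℝ) T))
    (h0 : 0 ≤ h 0)
    (hineq : ∀ t ∈ Set.Ico (0 : ℝ) T, -α (h t) ≤ h' t) :
    ∀ t ∈ Set.Ico (0 : ℝ) T, 0 ≤ h t := by
  intro t ht
  by_contra hneg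
  push_neg at hneg
  obtain ⟨ht0, htT⟩ := ht
  -- h is continuous on [0, t]
  have hsub : Set.Icc (0:ℝ) t ⊆ Set.Ico (0:ℝ) T := fun x hx =>
    ⟨hx.1, lt_of_le_of_lt hx.2 htT⟩
  have hcontIcc : ContinuousOn h (Set.Icc (0:ℝ) t) := fun x hx =>
    ((hderiv x (hsub hx)).continuousAt).continuousWithinAt
  -- the set of times in [0,t] where h ≥ 0
  set S : Set ℝ := Set.Icc (0:ℝ) t ∩ h ⁻¹' Set.Ici 0 with hS
  have hSclosed : IsClosed S :=
    hcontIcc.preimage_isClosed_of_isClosed isClosed_Icc isClosed_Ici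
  have hSne : S.Nonempty := ⟨0, ⟨le_refl 0, ht0⟩, h0⟩
  have hSbdd : BddAbove S := BddAbove.mono (Set.inter_subset_left) bddAbove_Icc
  set s := sSup S with hs
  have hsS : s ∈ S := hSclosed.csSup_mem hSne hSbdd
  have hs0 : 0 ≤ h s := hsS.2
  have hst : s ≤ t := hsS.1.2
  have hslt : s < t := lt_of_le_of_ne hst (by
    intro heq
    rw [heq] at hs0
    exact absurd hneg (not_lt.mpr hs0))
  -- for u ∈ (s, t], h u < 0
  have hneg' : ∀ u, s < u → u ≤ t → h u < 0 := by
    intro u hsu hut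
    by_contra hge
    push_neg at hge
    have : u ∈ S := ⟨⟨le_trans hsS.1.1 hsu.le, hut⟩, hge⟩
    exact absurd (le_csSup hSbdd this) (not_le.mpr hsu)
  -- h is strictly monotone on [s, t]
  have hmono : StrictMonoOn h (Set.Icc s t) := by
    apply strictMonoOn_of_hasDerivWithinAt_pos (convex_Icc s t)
    · exact hcontIcc.mono (Set.Icc_subset_Icc hsS.1.1 le_rfl)
    · intro u hu
      rw [interior_Icc] at hu
      exact ((hderiv u (hsub ⟨le_trans hsS.1.1 hu.1.le, hu.2.le⟩)).hasDerivWithinAt)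
    · intro u hu
      rw [interior_Icc] at hu
      have huT : u ∈ Set.Ico (0:ℝ) T := hsub ⟨le_trans hsS.1.1 hu.1.le, hu.2.le⟩
      have hhu : h u < 0 := hneg' u hu.1 hu.2.le
      have : α (h u) < 0 := by
        have := hαmono hhu
        rwa [hα0] at this
      linarith [hineq u huT]
  have := hmono (Set.left_mem_Icc.mpr hslt.le) (Set.right_mem_Icc.mpr hslt.le) hslt
  linarith
end

section
/- Let D ⊆ ℝⁿ, T = [0, ∞), and let q : ℝⁿ × T → ℝ. Suppose Z = {(z¹, t¹), ..., (z^m, t^m)} is such that {zⁱ} is an ε-net of D, and for each i there exist constants L(zⁱ), M(zⁱ) ≥ 0 and γ > 0 with: (a) q(zⁱ, tⁱ) ≥ γ; (b) z ↦ q(z, tⁱ) is L(zⁱ)-Lipschitz on B(zⁱ, ε); (c) |q(z̄, t') - q(z̄, t'')| ≤ M(zⁱ) for all z̄ ∈ B(zⁱ, ε) and all t', t'' ≥ 0; (d) ε ≤ (γ - M(zⁱ)) / L(zⁱ). Then for every (z, t) ∈ D × T there exists i such that q(z, t) ≥ 0. -/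
/-- Proposition 3: Given data `(z i, u i, t i)` with `{z i}` an `ε`-net of
`D`, margins `q (z i) (u i) (t i) ≥ γ`, Lipschitz continuity of `q (·) (u i) (t i)`
on `B(z i, ε)`, uniform boundedness `M i` of the time variation of `q` on `B(z i, ε)`,
and `ε ≤ (γ - M i) / L i`, the constraint `q z (u i) t ≥ 0` holds for some `i` at every
`(z, t) ∈ D × [0, ∞)`. -/
theorem stmt_6 {n m : ℕ} {U : Type*} (D : Set (EuclideanSpace ℝ (Fin n)))
    (q : EuclideanSpace ℝ (Fin n) → U → ℝ → ℝ)
    (z : Fin m → EuclideanSpace ℝ (Fin n)) (u : Fin m → U) (t : Fin m → ℝ)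
    (ht : ∀ i, 0 ≤ t i)
    (ε γ : ℝ) (hε : 0 < ε) (hγ : 0 < γ)
    (L M : Fin m → ℝ) (hL : ∀ i, 0 ≤ L i) (hM : ∀ i, 0 ≤ M i)
    (hnet : ∀ x ∈ D, ∃ i, ‖x - z i‖ ≤ ε)
    (hval : ∀ i, γ ≤ q (z i) (u i) (t i))
    (hlip : ∀ i, ∀ x ∈ Metric.closedBall (z i) ε, ∀ y ∈ Metric.closedBall (z i) ε,
      |q x (u i) (t i) - q y (u i) (t i)| ≤ L i * ‖x - y‖)
    (hbnd : ∀ i, ∀ x ∈ Metric.closedBall (z i) ε, ∀ t' t'' : ℝ, 0 ≤ t' → 0 ≤ t'' →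
      |q x (u i) t' - q x (u i) t''| ≤ M i)
    (hdense : ∀ i, ε ≤ (γ - M i) / L i) :
    ∀ x ∈ D, ∀ s : ℝ, 0 ≤ s → ∃ i, 0 ≤ q x (u i) s := by
  intro x hx s hs
  obtain ⟨i, hi⟩ := hnet x hx
  refine ⟨i, ?_⟩
  have hxball : x ∈ Metric.closedBall (z i) ε := by
    simpa [Metric.mem_closedBall, dist_eq_norm] using hi
  have hzball : z i ∈ Metric.closedBall (z i) ε := Metric.mem_closedBall_self hε.le
  have hLpos : 0 < L i := by
    rcases lt_or_eq_of_le (hL i) with h | h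
    · exact h
    · exfalso
      have := hdense i
      rw [← h, div_zero] at this
      linarith
  have hLε : L i * ε ≤ γ - M i := by
    have := (le_div_iff₀ hLpos).mp (hdense i)
    linarith [mul_comm ε (L i)]
  have h1 : |q x (u i) (t i) - q (z i) (u i) (t i)| ≤ L i * ε := by
    calc |q x (u i) (t i) - q (z i) (u i) (t i)| ≤ L i * ‖x - z i‖ :=
          hlip i x hxball (z i) hzball
      _ ≤ L i * ε := by exact mul_le_mul_of_nonneg_left hi (hL i)
  have h2 : |q x (u i) s - q x (u i) (t i)| ≤ M i := hbnd i x hxball s (t i) hs (ht i)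
  have := hval i
  have ha := abs_le.mp h1
  have hb := abs_le.mp h2
  linarith [ha.1, hb.1]
end
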